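/- If S ⊆ {0,1}^X is shattering-extremal then every restriction of S to a subcube C ⊆ {0,1}^X (normalized to a system on dim(C)) is shattering-extremal. -/

import Mathlib

open Finset

variable {α : Type*} [Fintype α] [DecidableEq α]

/-- `S` shatters `Y`: every assignment on `Y` extends to a member of `S`. -/
def shatters (S : Finset (α → Bool)) (Y : Finset α) : Prop :=
  ∀ f : α → Bool, ∃ s ∈ S, ∀ a ∈ Y, s a = f a

/-- `S` strongly shatters `Y`: some assignment off `Y` has all its `Y`-extensions in `S`. -/
def stronglyShatters (S : Finset (α → Bool)) (Y : Finset α) : Prop :=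
  ∃ g : α → Bool, ∀ f : α → Bool, (fun a => if a ∈ Y then f a else g a) ∈ S

open Classical in
/-- The family of shattered subsets. -/
noncomputable def strF (S : Finset (α → Bool)) : Finset (Finset α) :=
  Finset.univ.filter (fun Y => shatters S Y)

open Classical in
/-- The family of strongly shattered subsets. -/
noncomputable def sstrF (S : Finset (α → Bool)) : Finset (Finset α) :=
  Finset.univ.filter (fun Y => stronglyShatters S Y)

/-- Shattering-extremal: shattered = strongly shattered. -/
def SE (S : Finset (α → Bool)) : Prop :=
  ∀ Y : Finset α, shatters S Y ↔ stronglyShatters S Y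

/-!
Restricting to a subcube fixes the coordinates outside `Y` one at a time, so it suffices that the
two halves `Sᵦ = {f ∈ S | f i = b}` of an extremal `S` are extremal. Sorting the (strongly)
shattered sets `Z` by whether `i ∈ Z` gives `|sstr S| ≤ |sstr S₀| + |sstr S₁|` and
`|str S₀| + |str S₁| ≤ |str S|`. Since `sstr ⊆ str` always and `str S = sstr S`, the chain
`|str S₀| + |str S₁| ≤ |sstr S₀| + |sstr S₁|` forces `str Sᵦ = sstr Sᵦ` for both halves.
-/

section Shattering

omit [Fintype α]

variable {S T : Finset (α → Bool)} {Y Z : Finset α} {i : α}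

theorem stronglyShatters.shatters (h : stronglyShatters S Y) : shatters S Y := by
  obtain ⟨g, hg⟩ := h
  exact fun f => ⟨_, hg f, fun a ha => if_pos ha⟩

omit [DecidableEq α] in
theorem shatters.mono (hST : S ⊆ T) (h : shatters S Y) : shatters T Y := fun f =>
  let ⟨s, hs, hsf⟩ := h f
  ⟨s, hST hs, hsf⟩

omit [DecidableEq α] in
theorem notMem_of_shatters_filter_eq {b : Bool} (h : shatters (S.filter fun f => f i = b) Z) :
    i ∉ Z := by
  intro hi
  obtain ⟨s, hs, hsf⟩ := h fun _ => !b
  simpa [(mem_filter.1 hs).2] using hsf i hi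

theorem shatters_insert_of_forall_shatters_filter_eq
    (h : ∀ b, shatters (S.filter fun f => f i = b) Z) : shatters S (insert i Z) := by
  intro f
  obtain ⟨s, hs, hsf⟩ := h (f i) f
  rw [mem_filter] at hs
  exact ⟨s, hs.1, (forall_mem_insert _ _ _).2 ⟨hs.2, hsf⟩⟩

theorem stronglyShatters.exists_filter_eq (hi : i ∉ Z) (h : stronglyShatters S Z) :
    ∃ b, stronglyShatters (S.filter fun f => f i = b) Z := by
  obtain ⟨g, hg⟩ := h
  exact ⟨g i, g, fun f => mem_filter.2 ⟨hg f, if_neg hi⟩⟩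

theorem stronglyShatters.filter_eq_erase (hi : i ∈ Z) (h : stronglyShatters S Z) (b : Bool) :
    stronglyShatters (S.filter fun f => f i = b) (Z.erase i) := by
  obtain ⟨g, hg⟩ := h
  refine ⟨Function.update g i b, fun f => mem_filter.2 ⟨?_, by simp⟩⟩
  convert hg (Function.update f i b) using 1
  funext a
  by_cases hai : a = i
  · subst hai
    simp [hi]
  · simp [hai]

end Shattering

section Counting

omit [Fintype α]

variable {F A B : Finset (Finset α)} (i : α)

theorem card_le_card_add_card_of_erase_mem_inter (h_notMem : ∀ Z ∈ F, i ∉ Z → Z ∈ A ∪ B)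
    (h_mem : ∀ Z ∈ F, i ∈ Z → Z.erase i ∈ A ∩ B) : #F ≤ #A + #B := by
  calc #F = #(F.filter (i ∈ ·)) + #(F.filter (i ∉ ·)) := (card_filter_add_card_filter_not _).symm
    _ ≤ #(A ∩ B) + #(A ∪ B) := by
      refine add_le_add (card_le_card_of_injOn (fun Z => Z.erase i) (fun Z hZ => ?_) ?_)
        (card_le_card fun Z hZ => ?_)
      · rw [mem_coe, mem_filter] at hZ
        exact h_mem Z hZ.1 hZ.2
      · exact (erase_injOn' i).mono fun Z hZ => (mem_filter.1 hZ).2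
      · exact h_notMem Z (mem_filter.1 hZ).1 (mem_filter.1 hZ).2
    _ = #A + #B := by rw [add_comm, card_union_add_card_inter]

theorem card_add_card_le_card_of_insert_mem (h_union : ∀ Z ∈ A ∪ B, Z ∈ F ∧ i ∉ Z)
    (h_inter : ∀ Z ∈ A ∩ B, insert i Z ∈ F) : #A + #B ≤ #F := by
  have h_notMem : ∀ Z ∈ A ∩ B, i ∉ Z := fun Z hZ =>
    (h_union Z (mem_union_left B (mem_inter.1 hZ).1)).2
  calc #A + #B = #(A ∪ B) + #(A ∩ B) := (card_union_add_card_inter A B).symm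
    _ ≤ #(F.filter (i ∉ ·)) + #(F.filter (i ∈ ·)) := by
      refine add_le_add (card_le_card fun Z hZ => mem_filter.2 (h_union Z hZ))
        (card_le_card_of_injOn (insert i) (fun Z hZ => ?_) fun Z hZ W hW hZW => ?_)
      · exact mem_filter.2 ⟨h_inter Z hZ, mem_insert_self i Z⟩
      · simpa [erase_insert (h_notMem Z hZ), erase_insert (h_notMem W hW)] using
          congrArg (fun X => X.erase i) hZW
    _ = #F := by rw [add_comm, card_filter_add_card_filter_not]

end Counting

section Extremal

variable {S : Finset (α → Bool)}

omit [DecidableEq α] in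
theorem mem_strF {Y : Finset α} : Y ∈ strF S ↔ shatters S Y := by
  simp [strF]

theorem mem_sstrF {Y : Finset α} : Y ∈ sstrF S ↔ stronglyShatters S Y := by
  simp [sstrF]

theorem sstrF_subset_strF (S : Finset (α → Bool)) : sstrF S ⊆ strF S := fun _ hY =>
  mem_strF.2 (mem_sstrF.1 hY).shatters

theorem SE.strF_eq (h : SE S) : strF S = sstrF S := by
  ext Y
  rw [mem_strF, mem_sstrF]
  exact h Y

theorem SE_iff_card_strF_le_card_sstrF : SE S ↔ #(strF S) ≤ #(sstrF S) := by
  refine ⟨fun h => h.strF_eq ▸ le_rfl, fun h Y => ?_⟩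
  rw [← mem_strF, ← mem_sstrF, eq_of_subset_of_card_le (sstrF_subset_strF S) h]

theorem card_sstrF_le_card_sstrF_filter_add (S : Finset (α → Bool)) (i : α) :
    #(sstrF S) ≤ #(sstrF (S.filter fun f => f i = false)) +
      #(sstrF (S.filter fun f => f i = true)) := by
  refine card_le_card_add_card_of_erase_mem_inter i (fun Z hZ hi => ?_) (fun Z hZ hi => ?_)
  · obtain ⟨b, hb⟩ := (mem_sstrF.1 hZ).exists_filter_eq hi
    cases b
    · exact mem_union_left _ (mem_sstrF.2 hb)
    · exact mem_union_right _ (mem_sstrF.2 hb)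
  · exact mem_inter.2 ⟨mem_sstrF.2 ((mem_sstrF.1 hZ).filter_eq_erase hi _),
      mem_sstrF.2 ((mem_sstrF.1 hZ).filter_eq_erase hi _)⟩

theorem card_strF_filter_add_le (S : Finset (α → Bool)) (i : α) :
    #(strF (S.filter fun f => f i = false)) + #(strF (S.filter fun f => f i = true)) ≤
      #(strF S) := by
  refine card_add_card_le_card_of_insert_mem i (fun Z hZ => ?_) (fun Z hZ => ?_)
  · obtain ⟨b, hZ⟩ : ∃ b, shatters (S.filter fun f => f i = b) Z := by
      rcases mem_union.1 hZ with hZ | hZ <;> exact ⟨_, mem_strF.1 hZ⟩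
    exact ⟨mem_strF.2 (hZ.mono (filter_subset _ _)), notMem_of_shatters_filter_eq hZ⟩
  · rw [mem_inter, mem_strF, mem_strF] at hZ
    exact mem_strF.2 (shatters_insert_of_forall_shatters_filter_eq (Bool.forall_bool.2 hZ))

theorem SE.filter_eq (h : SE S) (i : α) (b : Bool) : SE (S.filter fun f => f i = b) := by
  have h_str := card_strF_filter_add_le S i
  have h_sstr := card_sstrF_le_card_sstrF_filter_add S i
  have h₀ := card_le_card (sstrF_subset_strF (S.filter fun f => f i = false))
  have h₁ := card_le_card (sstrF_subset_strF (S.filter fun f => f i = true))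
  rw [h.strF_eq] at h_str
  rw [SE_iff_card_strF_le_card_sstrF]
  cases b <;> omega

theorem SE.filter_forall_mem_eq (h : SE S) (g : α → Bool) (T : Finset α) :
    SE (S.filter fun f => ∀ a ∈ T, f a = g a) := by
  induction T using Finset.induction_on with
  | empty => simpa using h
  | insert i T _ ih =>
    have h_insert : (S.filter fun f => ∀ a ∈ insert i T, f a = g a) =
        (S.filter fun f => ∀ a ∈ T, f a = g a).filter fun f => f i = g i := by
      rw [filter_filter]
      simp only [forall_mem_insert, and_comm]
    rw [h_insert]
    exact ih.filter_eq i (g i)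

end Extremal

theorem stmt11 (S : Finset (α → Bool)) (Y : Finset α) (g : α → Bool) (h : SE S) :
    SE (S.filter fun f => ∀ a ∉ Y, f a = g a) := by
  simpa using h.filter_forall_mem_eq g (univ \ Y)
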